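/- Let A be an N×N symmetric nonnegative matrix with row sums 1-μ, μ ∈ (0,1), let B = A², and let Ω′ be any subset of indices with |Ω′| = N - K. Then for every ℓ, the ℓ-th row sum of H = (I - B_{Ω′})^{-1} satisfies Σ_m h_{ℓm} ≤ 1/(μ(2-μ)) = Σ_{k≥0}(1-μ)^{2k}. -/

import Mathlib

/-!
The principal submatrix `M = B_{Ω'}` of `B = A²` is entrywise nonnegative with row sums at most
`r = (1-μ)²`; by induction every power `M^k` is nonnegative with row sums at most `r^k`. In
particular the `ℓ∞` operator norm of `M` is below `1`, so `(1 - M)⁻¹ = ∑ₖ M^k`, and its row sums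
are dominated termwise by the geometric series `∑ₖ r^k = 1/(1 - r) = 1/(μ(2-μ))`.
-/

open Matrix Finset BigOperators

attribute [local instance] Matrix.linftyOpSeminormedAddCommGroup Matrix.linftyOpNormedRing
  Matrix.linftyOpNormedAlgebra

namespace Matrix

section RowSums

variable {m n o R : Type*} [Fintype n]

theorem sum_mul_apply [Fintype o] [NonUnitalNonAssocSemiring R] (A : Matrix m n R)
    (B : Matrix n o R) (i : m) : ∑ j, (A * B) i j = ∑ k, A i k * ∑ j, B k j := by
  simp only [mul_apply, Finset.mul_sum]
  exact Finset.sum_comm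

variable [Semiring R] [PartialOrder R] [IsOrderedRing R]

theorem mul_apply_nonneg {A : Matrix m n R} {B : Matrix n o R} (hA : ∀ i j, 0 ≤ A i j)
    (hB : ∀ i j, 0 ≤ B i j) (i : m) (j : o) : 0 ≤ (A * B) i j :=
  Finset.sum_nonneg fun k _ => mul_nonneg (hA i k) (hB k j)

theorem sum_mul_apply_le [Fintype o] {A : Matrix m n R} {B : Matrix n o R} {a b : R}
    (hA : ∀ i j, 0 ≤ A i j) (hb : 0 ≤ b) (hArow : ∀ i, ∑ j, A i j ≤ a)
    (hBrow : ∀ i, ∑ j, B i j ≤ b) (i : m) :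
    ∑ j, (A * B) i j ≤ a * b :=
  calc ∑ j, (A * B) i j = ∑ k, A i k * ∑ j, B k j := sum_mul_apply A B i
    _ ≤ ∑ k, A i k * b :=
      Finset.sum_le_sum fun k _ => mul_le_mul_of_nonneg_left (hBrow k) (hA i k)
    _ = (∑ k, A i k) * b := (Finset.sum_mul _ _ _).symm
    _ ≤ a * b := mul_le_mul_of_nonneg_right (hArow i) hb

variable [DecidableEq n] {M : Matrix n n R} {r : R}

theorem sum_pow_apply_le (hM : ∀ i j, 0 ≤ M i j) (hr : 0 ≤ r) (hMrow : ∀ i, ∑ j, M i j ≤ r)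
    (k : ℕ) (i : n) : ∑ j, (M ^ k) i j ≤ r ^ k := by
  induction k generalizing i with
  | zero => simp [one_apply]
  | succ k ih =>
    rw [pow_succ, pow_succ]
    exact sum_mul_apply_le (pow_apply_nonneg hM k) hr ih hMrow i

end RowSums

theorem sum_submatrix_apply_le {m m' n n' R : Type*} [Fintype n] [Fintype n'] [AddCommMonoid R]
    [PartialOrder R] [IsOrderedAddMonoid R] {A : Matrix m n R} (hA : ∀ i j, 0 ≤ A i j)
    (e : m' → m) {f : n' → n} (hf : Function.Injective f) (i : m') :
    ∑ j, A.submatrix e f i j ≤ ∑ j, A (e i) j :=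
  calc ∑ j, A.submatrix e f i j = ∑ j ∈ Finset.univ.map ⟨f, hf⟩, A (e i) j :=
        (Finset.sum_map Finset.univ ⟨f, hf⟩ (A (e i))).symm
    _ ≤ ∑ j, A (e i) j := Finset.sum_le_univ_sum_of_nonneg fun j => hA (e i) j

theorem linfty_opNorm_le_of_sum_norm_le {m n α : Type*} [Fintype m] [Fintype n]
    [SeminormedAddCommGroup α] {A : Matrix m n α} {r : ℝ} (hr : 0 ≤ r)
    (h : ∀ i, ∑ j, ‖A i j‖ ≤ r) : ‖A‖ ≤ r := by
  rw [linfty_opNorm_def, ← NNReal.coe_mk r hr, NNReal.coe_le_coe]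
  refine Finset.sup_le fun i _ => ?_
  rw [← NNReal.coe_le_coe, NNReal.coe_sum]
  exact h i

theorem hasSum_sum_pow_apply_inv {n 𝕜 : Type*} [Fintype n] [DecidableEq n]
    [RCLike 𝕜] (M : Matrix n n 𝕜) (hM : ‖M‖ < 1) (i : n) :
    HasSum (fun k => ∑ j, (M ^ k) i j) (∑ j, (1 - M)⁻¹ i j) := by
  have hNeumann := hasSum_geom_series_inverse M hM
  rw [← nonsing_inv_eq_ringInverse] at hNeumann
  exact hasSum_sum fun j _ => Pi.hasSum.1 (Pi.hasSum.1 hNeumann i) j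

end Matrix

theorem H_row_sums_le_general
    {N : ℕ} (μ : ℝ) (hμ0 : 0 < μ) (hμ1 : μ < 1)
    (A : Matrix (Fin N) (Fin N) ℝ)
    (hnonneg : ∀ i j, 0 ≤ A i j) (hrow : ∀ i, ∑ j, A i j = 1 - μ)
    (S : Finset (Fin N))
    (H : Matrix {i // i ∈ Sᶜ} {i // i ∈ Sᶜ} ℝ)
    (hH : H = (1 - (A * A).submatrix (fun i : {i // i ∈ Sᶜ} => (i : Fin N))
              (fun j : {j // j ∈ Sᶜ} => (j : Fin N)))⁻¹) :
    (∀ ℓ, ∑ m, H ℓ m ≤ 1 / (μ * (2 - μ)))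
      ∧ 1 / (μ * (2 - μ)) = ∑' k : ℕ, (1 - μ) ^ (2 * k) := by
  set r : ℝ := (1 - μ) ^ 2
  have hr0 : 0 ≤ r := by positivity
  have hr1 : r < 1 := by nlinarith
  set M := (A * A).submatrix (fun i : {i // i ∈ Sᶜ} => (i : Fin N))
    (fun j : {j // j ∈ Sᶜ} => (j : Fin N))
  have hM0 : ∀ i j, 0 ≤ M i j := fun i j => mul_apply_nonneg hnonneg hnonneg _ _
  have hMrow : ∀ i, ∑ j, M i j ≤ r := fun i =>
    calc ∑ j, M i j ≤ ∑ j, (A * A) i j :=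
          sum_submatrix_apply_le (mul_apply_nonneg hnonneg hnonneg) _ Subtype.val_injective i
      _ ≤ (1 - μ) * (1 - μ) :=
          sum_mul_apply_le hnonneg (by linarith) (fun i => (hrow i).le) (fun i => (hrow i).le) _
      _ = r := (sq _).symm
  have hM : ‖M‖ < 1 := by
    refine (linfty_opNorm_le_of_sum_norm_le hr0 fun i => ?_).trans_lt hr1
    simpa only [Real.norm_of_nonneg (hM0 i _)] using hMrow i
  have hgeom : HasSum (fun k => r ^ k) (1 - r)⁻¹ := hasSum_geometric_of_lt_one hr0 hr1
  have hlimit : 1 / (μ * (2 - μ)) = (1 - r)⁻¹ := by rw [one_div]; ring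
  refine ⟨fun ℓ => ?_, ?_⟩
  · rw [hH, hlimit]
    exact hasSum_le (fun k => sum_pow_apply_le hM0 hr0 hMrow k ℓ)
      (hasSum_sum_pow_apply_inv M hM ℓ) hgeom
  · simp only [hlimit, ← hgeom.tsum_eq, pow_mul, r]

/-- With `A` symmetric nonnegative, row sums `1-μ`, `B = A²`, `H = (I - B_{Ω'Ω'})⁻¹`:
every row sum of `H` is at most `1/(μ(2-μ)) = Σ_{k≥0} (1-μ)^{2k}`. -/
theorem H_row_sums_le
    {N : ℕ} (μ : ℝ) (hμ0 : 0 < μ) (hμ1 : μ < 1)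
    (A : Matrix (Fin N) (Fin N) ℝ) (hsymm : A.IsSymm)
    (hnonneg : ∀ i j, 0 ≤ A i j) (hrow : ∀ i, ∑ j, A i j = 1 - μ)
    (S : Finset (Fin N))
    (H : Matrix {i // i ∈ Sᶜ} {i // i ∈ Sᶜ} ℝ)
    (hH : H = (1 - (A * A).submatrix (fun i : {i // i ∈ Sᶜ} => (i : Fin N))
              (fun j : {j // j ∈ Sᶜ} => (j : Fin N)))⁻¹) :
    (∀ ℓ, ∑ m, H ℓ m ≤ 1 / (μ * (2 - μ)))
      ∧ 1 / (μ * (2 - μ)) = ∑' k : ℕ, (1 - μ) ^ (2 * k) :=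
  H_row_sums_le_general μ hμ0 hμ1 A hnonneg hrow S H hH
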